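/- arXiv:1509.00748 — 4 statements merged into one kernel-verified Lean document; each statement's English description precedes it below -/
import Mathlib

section
/- Let q(λ) = 1 − λ + Σ_{k=1}^r c_k/(λ − λ_k) with c_k ≥ 0 and λ_1 ≥ ... ≥ λ_r. Suppose δ > 0, √r·δ ≤ 1, and λ_k ≤ 1 + δ(2r−k)/√r for all k, and Σ_{k=1}^r c_k/k ≤ 2δ². Then every λ > 1 + 2δ√r satisfies q(λ) < 0; hence the largest root of q is at most 1 + 2δ√r. -/
theorem stmt10 {r : ℕ} (hr : 1 ≤ r) (c : Fin r → ℝ) (hc : ∀ k, 0 ≤ c k)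
    (lam : Fin r → ℝ) (hmono : Antitone lam) (δ : ℝ) (hδ : 0 < δ)
    (hδr : Real.sqrt r * δ ≤ 1)
    (hlam : ∀ k : Fin r, lam k ≤ 1 + δ * (2 * (r : ℝ) - ((k : ℕ) + 1)) / Real.sqrt r)
    (hsum : ∑ k, c k / ((k : ℕ) + 1) ≤ 2 * δ ^ 2) :
    ∀ x : ℝ, 1 + 2 * δ * Real.sqrt r < x →
      1 - x + ∑ k, c k / (x - lam k) < 0 := by
  intro x hx
  have hrpos : (0 : ℝ) < r := by exact_mod_cast hr
  have hs : 0 < Real.sqrt r := Real.sqrt_pos.mpr hrpos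
  have hsq : Real.sqrt r * Real.sqrt r = (r : ℝ) := Real.mul_self_sqrt hrpos.le
  have hk : ∀ k : Fin r, δ * ((k : ℕ) + 1) / Real.sqrt r ≤ x - lam k := by
    intro k
    have h1 := hlam k
    have h2 : 2 * δ * Real.sqrt r - δ * (2 * (r : ℝ) - ((k : ℕ) + 1)) / Real.sqrt r
        = δ * ((k : ℕ) + 1) / Real.sqrt r := by
      field_simp
      ring_nf
      nlinarith [hsq]
    nlinarith [hlam k]
  have hbound : ∀ k : Fin r, c k / (x - lam k) ≤ Real.sqrt r / δ * (c k / ((k : ℕ) + 1)) := by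
    intro k
    have hkp : 0 < δ * ((k : ℕ) + 1) / Real.sqrt r := by positivity
    have h1 : c k / (x - lam k) ≤ c k / (δ * ((k : ℕ) + 1) / Real.sqrt r) :=
      div_le_div_of_nonneg_left (hc k) hkp (hk k)
    have h2 : c k / (δ * ((k : ℕ) + 1) / Real.sqrt r)
        = Real.sqrt r / δ * (c k / ((k : ℕ) + 1)) := by
      field_simp
    linarith [h1, h2.le, h2.ge]
  have hsum2 : ∑ k, c k / (x - lam k) ≤ Real.sqrt r / δ * ∑ k, c k / ((k : ℕ) + 1) := by
    rw [Finset.mul_sum]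
    exact Finset.sum_le_sum fun k _ => hbound k
  have hsum3 : Real.sqrt r / δ * ∑ k, c k / ((k : ℕ) + 1) ≤ 2 * δ * Real.sqrt r := by
    have := mul_le_mul_of_nonneg_left hsum (le_of_lt (div_pos hs hδ))
    calc Real.sqrt r / δ * ∑ k, c k / ((k : ℕ) + 1)
        ≤ Real.sqrt r / δ * (2 * δ ^ 2) := this
      _ = 2 * δ * Real.sqrt r := by field_simp
  linarith
end

section
/- Let q(λ) = 1 − λ + Σ_{k=1}^r c_k/(λ − λ_k) with c_k ≥ 0 and λ_1 ≥ ... ≥ λ_r. Suppose δ > 0 and λ_k ≥ 1 − δ(r+k−1)/√r for all k, and Σ_{k=1}^r c_k/(r+1−k) ≤ 2δ². Then every λ < 1 − 2δ√r satisfies q(λ) > 0; hence the smallest root of q is at least 1 − 2δ√r. -/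
theorem stmt11 {r : ℕ} (hr : 1 ≤ r) (c : Fin r → ℝ) (hc : ∀ k, 0 ≤ c k)
    (lam : Fin r → ℝ) (hmono : Antitone lam) (δ : ℝ) (hδ : 0 < δ)
    (hlam : ∀ k : Fin r, 1 - δ * ((r : ℝ) + ((k : ℕ) + 1) - 1) / Real.sqrt r ≤ lam k)
    (hsum : ∑ k, c k / ((r : ℝ) + 1 - ((k : ℕ) + 1)) ≤ 2 * δ ^ 2) :
    ∀ x : ℝ, x < 1 - 2 * δ * Real.sqrt r →
      0 < 1 - x + ∑ k, c k / (x - lam k) := by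
  intro x hx
  have hr' : (1:ℝ) ≤ (r:ℝ) := by exact_mod_cast hr
  have hs : 0 < Real.sqrt r := Real.sqrt_pos.mpr (by linarith)
  set s := Real.sqrt r with hsdef
  have hs2 : s * s = (r:ℝ) := Real.mul_self_sqrt (by linarith)
  have key : ∀ k : Fin r, -(s/δ) * (c k / ((r : ℝ) + 1 - ((k : ℕ) + 1))) ≤ c k / (x - lam k) := by
    intro k
    have hk : ((k:ℕ):ℝ) < (r:ℝ) := by exact_mod_cast k.2
    have hd : (0:ℝ) < (r:ℝ) + 1 - ((k:ℕ) + 1) := by linarith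
    have h1 := hlam k
    have heq : 2*δ*s - δ * ((r:ℝ) + ((k:ℕ)+1) - 1)/s = δ * ((r:ℝ)+1-((k:ℕ)+1))/s := by
      field_simp
      nlinarith [hs2]
    have hgap : δ * ((r:ℝ)+1-((k:ℕ)+1))/s ≤ lam k - x := by nlinarith [heq]
    have hgap0 : 0 < δ * ((r:ℝ)+1-((k:ℕ)+1))/s := by positivity
    have h2 : c k / (lam k - x) ≤ c k / (δ * ((r:ℝ)+1-((k:ℕ)+1))/s) := by
      gcongr
      exact hc k
    have h3 : c k / (δ * ((r:ℝ)+1-((k:ℕ)+1))/s) = (s/δ) * (c k / ((r:ℝ)+1-((k:ℕ)+1))) := by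
      field_simp
    have h4 : c k / (x - lam k) = -(c k / (lam k - x)) := by
      rw [show x - lam k = -(lam k - x) by ring, div_neg]
    rw [h4]
    nlinarith [h2, h3]
  have hsum2 : -(s/δ) * ∑ k, c k / ((r : ℝ) + 1 - ((k : ℕ) + 1)) ≤ ∑ k, c k / (x - lam k) := by
    rw [Finset.mul_sum]
    exact Finset.sum_le_sum fun k _ => key k
  have hpos : 0 < s/δ := by positivity
  have h5 : -(s/δ) * (2 * δ^2) ≤ -(s/δ) * ∑ k, c k / ((r : ℝ) + 1 - ((k : ℕ) + 1)) := by
    nlinarith [hsum, hpos]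
  have h6 : -(s/δ) * (2 * δ^2) = -(2*δ*s) := by field_simp
  nlinarith [hsum2, h5]
end

section
/- Greedy selection lemma: Let X ∈ R^{n×p} have unit-norm columns. Let Y_r be an n×r matrix whose columns are r distinct columns of X (r < p), with Gram eigenvalues λ_{k,r} and orthonormal eigenvectors v_k. Then there exists a column y of X not among the columns of Y_r such that Σ_{k=1}^r (v_kᵀ Y_rᵀ y)²/k ≤ λ_{1,r}·‖X‖²·H_r/(p−r), where H_r = Σ_{k=1}^r 1/k is the r-th harmonic number. -/
open Matrix

noncomputable def opNorm {n p : ℕ} (X : Matrix (Fin n) (Fin p) ℝ) : ℝ :=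
  ‖(LinearMap.toContinuousLinearMap
      (Matrix.toEuclideanLin X : EuclideanSpace ℝ (Fin p) →ₗ[ℝ] EuclideanSpace ℝ (Fin n)))‖

open scoped Matrix.Norms.L2Operator in
lemma opNorm_eq_l2 {n p : ℕ} (X : Matrix (Fin n) (Fin p) ℝ) : ‖X‖ = opNorm X := by
  rw [Matrix.l2_opNorm_def, opNorm, LinearEquiv.trans_apply]

open scoped Matrix.Norms.L2Operator in
lemma key_bound {n p : ℕ} (X : Matrix (Fin n) (Fin p) ℝ) (w : Fin n → ℝ) :
    ∑ j, ((Xᵀ *ᵥ w) j) ^ 2 ≤ opNorm X ^ 2 * ∑ i, (w i) ^ 2 := by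
  classical
  have h := Matrix.l2_opNorm_mulVec (Xᴴ) ((EuclideanSpace.equiv (Fin n) ℝ).symm w)
  rw [Matrix.l2_opNorm_conjTranspose, opNorm_eq_l2] at h
  have hXt : (Xᴴ : Matrix (Fin p) (Fin n) ℝ) = Xᵀ :=
    Matrix.conjTranspose_eq_transpose_of_trivial X
  rw [hXt] at h
  have hn1 : ‖(EuclideanSpace.equiv (Fin p) ℝ).symm (Xᵀ *ᵥ ((EuclideanSpace.equiv (Fin n) ℝ).symm w : EuclideanSpace ℝ (Fin n)))‖ ^ 2
      = ∑ j, ((Xᵀ *ᵥ w) j) ^ 2 := by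
    rw [EuclideanSpace.norm_eq, Real.sq_sqrt (by positivity)]
    simp only [Real.norm_eq_abs, sq_abs]
    rfl
  have hn2 : ‖((EuclideanSpace.equiv (Fin n) ℝ).symm w : EuclideanSpace ℝ (Fin n))‖ ^ 2
      = ∑ i, (w i) ^ 2 := by
    rw [EuclideanSpace.norm_eq, Real.sq_sqrt (by positivity)]
    simp only [Real.norm_eq_abs, sq_abs]
    rfl
  calc ∑ j, ((Xᵀ *ᵥ w) j) ^ 2 = _ := hn1.symm
    _ ≤ (opNorm X * ‖((EuclideanSpace.equiv (Fin n) ℝ).symm w : EuclideanSpace ℝ (Fin n))‖) ^ 2 := by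
        apply pow_le_pow_left₀ (norm_nonneg _) h
    _ = opNorm X ^ 2 * ∑ i, (w i) ^ 2 := by rw [mul_pow, hn2]

theorem stmt13 {n p r : ℕ} (X : Matrix (Fin n) (Fin p) ℝ)
    (hcol : ∀ j, ∑ i, (X i j) ^ 2 = 1) (hrp : r < p)
    (f : Fin r → Fin p) (hf : Function.Injective f)
    (Y : Matrix (Fin n) (Fin r) ℝ) (hY : Y = X.submatrix id f)
    (lam : Fin r → ℝ) (hmono : Antitone lam) (v : Fin r → (Fin r → ℝ))
    (horth : ∀ k l, v k ⬝ᵥ v l = if k = l then (1 : ℝ) else 0)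
    (heig : ∀ k, (Yᵀ * Y) *ᵥ v k = lam k • v k) (hr : 0 < r) :
    ∃ j : Fin p, j ∉ Set.range f ∧
      ∑ k, (v k ⬝ᵥ (Yᵀ *ᵥ (fun i => X i j))) ^ 2 / ((k : ℕ) + 1) ≤
        lam ⟨0, hr⟩ * opNorm X ^ 2 * (∑ k : Fin r, 1 / ((k : ℕ) + 1 : ℝ)) /
          ((p : ℝ) - r) := by
  classical
  set x0 : Fin r := ⟨0, hr⟩ with hx0
  -- eigenvalue identities
  have hlam_eq : ∀ k, lam k = ∑ i, ((Y *ᵥ v k) i) ^ 2 := by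
    intro k
    have h1 : (Y *ᵥ v k) ⬝ᵥ (Y *ᵥ v k) = v k ⬝ᵥ ((Yᵀ * Y) *ᵥ v k) := by
      rw [← Matrix.mulVec_mulVec, Matrix.dotProduct_mulVec (v k), Matrix.vecMul_transpose]
    rw [heig k, dotProduct_smul, horth k k, if_pos rfl, smul_eq_mul, mul_one] at h1
    rw [← h1, dotProduct]
    exact Finset.sum_congr rfl fun i _ => (sq ((Y *ᵥ v k) i)).symm
  have hlam_nonneg : ∀ k, 0 ≤ lam k := fun k => by
    rw [hlam_eq k]; positivity
  have hlam_le : ∀ k, lam k ≤ lam x0 := fun k => hmono (Fin.mk_le_of_le_val (Nat.zero_le _))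
  -- the scoring function
  set g : Fin p → ℝ := fun j =>
    ∑ k, (v k ⬝ᵥ (Yᵀ *ᵥ (fun i => X i j))) ^ 2 / ((k : ℕ) + 1) with hg
  have hg_nonneg : ∀ j, 0 ≤ g j := fun j => by
    apply Finset.sum_nonneg; intro k _; positivity
  set S : Finset (Fin p) := Finset.univ \ Finset.image f Finset.univ with hS
  have hcard : (S.card : ℝ) = (p : ℝ) - r := by
    rw [hS, Finset.card_sdiff_of_subset (Finset.subset_univ _), Finset.card_image_of_injective _ hf,
      Finset.card_univ, Finset.card_univ, Fintype.card_fin, Fintype.card_fin,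
      Nat.cast_sub hrp.le]
  have hScard_pos : 0 < S.card := by
    have hrp' : (r : ℝ) < p := by exact_mod_cast hrp
    have : (0 : ℝ) < (S.card : ℝ) := by rw [hcard]; linarith
    exact_mod_cast this
  have hSne : S.Nonempty := Finset.card_pos.mp hScard_pos
  -- total sum bound
  set T : ℝ := lam x0 * opNorm X ^ 2 * (∑ k : Fin r, 1 / ((k : ℕ) + 1 : ℝ)) with hT
  have hsum : ∑ j ∈ S, g j ≤ T := by
    have h1 : ∑ j ∈ S, g j ≤ ∑ j, g j :=
      Finset.sum_le_sum_of_subset_of_nonneg (Finset.subset_univ _)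
        (fun j _ _ => hg_nonneg j)
    have h2 : ∑ j, g j = ∑ k : Fin r, (∑ j, (v k ⬝ᵥ (Yᵀ *ᵥ (fun i => X i j))) ^ 2) / ((k : ℕ) + 1) := by
      rw [Finset.sum_comm]
      exact Finset.sum_congr rfl fun k _ => (Finset.sum_div _ _ _).symm
    have h3 : ∀ k : Fin r, (∑ j, (v k ⬝ᵥ (Yᵀ *ᵥ (fun i => X i j))) ^ 2)
        ≤ lam x0 * opNorm X ^ 2 := by
      intro k
      have hdp : ∀ j : Fin p, v k ⬝ᵥ (Yᵀ *ᵥ (fun i => X i j)) = (Xᵀ *ᵥ (Y *ᵥ v k)) j := by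
        intro j
        rw [Matrix.dotProduct_mulVec, Matrix.vecMul_transpose, dotProduct_comm]
        rfl
      calc ∑ j, (v k ⬝ᵥ (Yᵀ *ᵥ (fun i => X i j))) ^ 2
          = ∑ j, ((Xᵀ *ᵥ (Y *ᵥ v k)) j) ^ 2 := by
            exact Finset.sum_congr rfl fun j _ => by rw [hdp j]
        _ ≤ opNorm X ^ 2 * ∑ i, ((Y *ᵥ v k) i) ^ 2 := key_bound X _
        _ = opNorm X ^ 2 * lam k := by rw [← hlam_eq k]
        _ ≤ opNorm X ^ 2 * lam x0 := by
            apply mul_le_mul_of_nonneg_left (hlam_le k) (by positivity)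
        _ = lam x0 * opNorm X ^ 2 := mul_comm _ _
    calc ∑ j ∈ S, g j ≤ ∑ j, g j := h1
      _ = ∑ k : Fin r, (∑ j, (v k ⬝ᵥ (Yᵀ *ᵥ (fun i => X i j))) ^ 2) / ((k : ℕ) + 1) := h2
      _ ≤ ∑ k : Fin r, (lam x0 * opNorm X ^ 2) / ((k : ℕ) + 1) := by
          apply Finset.sum_le_sum; intro k _
          gcongr
          exact h3 k
      _ = T := by
          rw [hT, Finset.mul_sum]
          exact Finset.sum_congr rfl fun k _ => by rw [mul_one_div]
  -- averaging
  have havg : ∃ j ∈ S, g j ≤ T / ((p : ℝ) - r) := by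
    apply Finset.exists_le_of_sum_le hSne
    rw [Finset.sum_const, nsmul_eq_mul, hcard]
    rw [mul_div_cancel₀]
    · exact hsum
    · rw [← hcard]; exact_mod_cast hScard_pos.ne'
  obtain ⟨j, hjS, hjle⟩ := havg
  refine ⟨j, ?_, hjle⟩
  rw [hS, Finset.mem_sdiff] at hjS
  intro hjr
  obtain ⟨a, ha⟩ := hjr
  exact hjS.2 (Finset.mem_image.mpr ⟨a, Finset.mem_univ a, ha⟩)
end

section
/- Let Y ∈ R^{n×r} with r ≥ 1 such that all eigenvalues of YᵀY lie in [1−ε, 1+ε] with 0 < ε < 1. If y is a unit vector in R^n and Y' = [y, Y], and λ is an eigenvalue of Y'ᵀY' with λ > λ_max(YᵀY), then 1 − λ + ‖Yᵀy‖²/(λ − λ_max(YᵀY)) ≥ 0. -/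
/-!
Let `A = YᵀY`, `b = Yᵀy`, `m = λ_max(A)` and write an eigenvector of `Y'ᵀY'` for `λ` as `(v₀, w)`.
The eigenvalue equations read `v₀ + ⟪b, w⟫ = λ v₀` and `v₀ b = (λ - A) w`. As `λ > m`, the matrix
`λ - A` is injective, so `v₀ ≠ 0`. As `A ≤ m` in the Loewner order, every `u` satisfies
`(λ - m) ⟪(λ - A) u, u⟫ ≤ ‖(λ - A) u‖²`; for `u = w` this is `(λ - m)(λ - 1) v₀² ≤ v₀² ‖b‖²`.
-/

open Matrix

noncomputable def eigs {m : ℕ} {A : Matrix (Fin m) (Fin m) ℝ} (hA : A.IsHermitian)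
    (k : Fin m) : ℝ :=
  (hA.eigenvalues ∘ Tuple.sort hA.eigenvalues) k.rev

lemma Tuple.le_comp_sort_rev_zero {α : Type*} [LinearOrder α] {m : ℕ} (hm : 0 < m)
    (f : Fin m → α) (i : Fin m) : f i ≤ (f ∘ Tuple.sort f) (⟨0, hm⟩ : Fin m).rev := by
  rw [show f i = (f ∘ Tuple.sort f) ((Tuple.sort f).symm i) by simp]
  refine Tuple.monotone_sort f ?_
  have := ((Tuple.sort f).symm i).isLt
  rw [Fin.le_def, Fin.val_rev]
  simp only
  omega

lemma le_eigs_zero_of_mem_spectrum {m : ℕ} (hm : 0 < m) {A : Matrix (Fin m) (Fin m) ℝ}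
    (hA : A.IsHermitian) {μ : ℝ} (hμ : μ ∈ spectrum ℝ A) : μ ≤ eigs hA ⟨0, hm⟩ := by
  rw [hA.spectrum_real_eq_range_eigenvalues] at hμ
  obtain ⟨i, rfl⟩ := hμ
  exact Tuple.le_comp_sort_rev_zero hm _ i

section Quadratic

variable {ι : Type*} [Fintype ι]

open scoped MatrixOrder in
lemma dotProduct_mulVec_le_of_spectrum_le [DecidableEq ι] {A : Matrix ι ι ℝ}
    (hA : A.IsHermitian) {m : ℝ} (h : ∀ μ ∈ spectrum ℝ A, μ ≤ m) (x : ι → ℝ) :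
    x ⬝ᵥ A *ᵥ x ≤ m * (x ⬝ᵥ x) := by
  have hpsd : (m • (1 : Matrix ι ι ℝ) - A).PosSemidef := by
    simpa [Algebra.algebraMap_eq_smul_one] using
      Matrix.le_iff.mp (le_algebraMap_of_spectrum_le h hA)
  have := hpsd.dotProduct_mulVec_nonneg x
  simp only [star_trivial, sub_mulVec, smul_mulVec, one_mulVec, dotProduct_sub,
    dotProduct_smul, smul_eq_mul] at this
  linarith

lemma eq_zero_of_mulVec_eq_smul {A : Matrix ι ι ℝ} {m : ℝ}
    (hA : ∀ x, x ⬝ᵥ A *ᵥ x ≤ m * (x ⬝ᵥ x)) {lam : ℝ} (hlt : m < lam) {w : ι → ℝ}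
    (hw : A *ᵥ w = lam • w) : w = 0 := by
  have h := hA w
  rw [hw, dotProduct_smul, smul_eq_mul] at h
  have hww : w ⬝ᵥ w ≤ 0 := by nlinarith
  have hww' : 0 ≤ w ⬝ᵥ w := by simpa using dotProduct_self_star_nonneg w
  exact dotProduct_self_eq_zero.mp (le_antisymm hww hww')

/-- With `p = (m - A) u`, the difference `‖b‖² - (λ - m) ⟪b, u⟫` is `‖p‖² + (λ - m) ⟪p, u⟫`. -/
lemma mul_dotProduct_le_dotProduct_self {A : Matrix ι ι ℝ} {m : ℝ}
    (hA : ∀ x, x ⬝ᵥ A *ᵥ x ≤ m * (x ⬝ᵥ x)) {lam : ℝ} (hm : m ≤ lam) {u b : ι → ℝ}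
    (hb : b = lam • u - A *ᵥ u) : (lam - m) * (b ⬝ᵥ u) ≤ b ⬝ᵥ b := by
  set p := m • u - A *ᵥ u
  have hbp : b = p + (lam - m) • u := by rw [hb]; module
  have hpu : 0 ≤ p ⬝ᵥ u := by
    have := hA u
    simp only [p, sub_dotProduct, smul_dotProduct, smul_eq_mul, dotProduct_comm (A *ᵥ u) u]
    linarith
  have hpp : 0 ≤ p ⬝ᵥ p := by simpa using dotProduct_self_star_nonneg p
  rw [hbp]
  simp only [add_dotProduct, dotProduct_add, smul_dotProduct, dotProduct_smul, smul_eq_mul,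
    dotProduct_comm u p]
  nlinarith

end Quadratic

lemma exists_mulVec_eq_smul_of_mem_spectrum {ι K : Type*} [Fintype ι] [DecidableEq ι] [Field K]
    {M : Matrix ι ι K} {lam : K} (h : lam ∈ spectrum K M) : ∃ v ≠ 0, M *ᵥ v = lam • v := by
  rw [← spectrum_toLin', ← Module.End.hasEigenvalue_iff_mem_spectrum] at h
  obtain ⟨v, hv⟩ := h.exists_hasEigenvector
  exact ⟨v, hv.2, by simpa using hv.apply_eq_smul⟩

def prependCol {ι R : Type*} {r : ℕ} (y : ι → R) (Y : Matrix ι (Fin r) R) :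
    Matrix ι (Fin (r + 1)) R :=
  of fun i j => Fin.cases (y i) (fun k => Y i k) j

section PrependCol

variable {ι R : Type*} [CommRing R] {r : ℕ} (y : ι → R) (Y : Matrix ι (Fin r) R)

lemma prependCol_mulVec (v : Fin (r + 1) → R) :
    prependCol y Y *ᵥ v = v 0 • y + Y *ᵥ Fin.tail v := by
  ext i
  simp [prependCol, mulVec, dotProduct, Fin.sum_univ_succ, Fin.tail, mul_comm]

lemma prependCol_transpose_mulVec_zero [Fintype ι] (z : ι → R) :
    ((prependCol y Y)ᵀ *ᵥ z) 0 = y ⬝ᵥ z := by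
  simp [prependCol, mulVec, dotProduct]

lemma tail_prependCol_transpose_mulVec [Fintype ι] (z : ι → R) :
    Fin.tail ((prependCol y Y)ᵀ *ᵥ z) = Yᵀ *ᵥ z := by
  ext k
  simp [prependCol, mulVec, dotProduct, Fin.tail]

lemma prependCol_gram_eigen [Fintype ι] {lam : R} {v : Fin (r + 1) → R}
    (hv : ((prependCol y Y)ᵀ * prependCol y Y) *ᵥ v = lam • v) :
    v 0 * (y ⬝ᵥ y) + (Yᵀ *ᵥ y) ⬝ᵥ Fin.tail v = lam * v 0 ∧
      v 0 • (Yᵀ *ᵥ y) + (Yᵀ * Y) *ᵥ Fin.tail v = lam • Fin.tail v := by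
  rw [← mulVec_mulVec, prependCol_mulVec] at hv
  constructor
  · have h := congrFun hv 0
    rw [prependCol_transpose_mulVec_zero, dotProduct_add, dotProduct_smul, smul_eq_mul,
      dotProduct_mulVec, ← mulVec_transpose, Pi.smul_apply, smul_eq_mul] at h
    exact h
  · have h := congrArg Fin.tail hv
    change _ = lam • Fin.tail v at h
    rwa [tail_prependCol_transpose_mulVec, mulVec_add, mulVec_smul, mulVec_mulVec] at h

end PrependCol

theorem stmt16_general {n r : ℕ} (hr : 0 < r) (Y : Matrix (Fin n) (Fin r) ℝ)
    (y : Fin n → ℝ) (hy : y ⬝ᵥ y = 1)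
    (Y' : Matrix (Fin n) (Fin (r + 1)) ℝ)
    (hY' : Y' = Matrix.of fun i j => Fin.cases (y i) (fun k => Y i k) j)
    (lam : ℝ) (hlam : lam ∈ spectrum ℝ (Y'ᵀ * Y'))
    (hgt : eigs (Matrix.isHermitian_conjTranspose_mul_self Y) ⟨0, hr⟩ < lam) :
    0 ≤ 1 - lam + (∑ k, ((Yᵀ *ᵥ y) k) ^ 2) /
        (lam - eigs (Matrix.isHermitian_conjTranspose_mul_self Y) ⟨0, hr⟩) := by
  set m := eigs (Matrix.isHermitian_conjTranspose_mul_self Y) ⟨0, hr⟩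
  set b := Yᵀ *ᵥ y
  have hA : ∀ x, x ⬝ᵥ (Yᵀ * Y) *ᵥ x ≤ m * (x ⬝ᵥ x) :=
    dotProduct_mulVec_le_of_spectrum_le (isHermitian_conjTranspose_mul_self Y)
      fun _ hμ => le_eigs_zero_of_mem_spectrum hr _ hμ
  obtain ⟨v, hv_ne, hv⟩ := exists_mulVec_eq_smul_of_mem_spectrum hlam
  obtain ⟨hhead, htail⟩ := prependCol_gram_eigen y Y (hY' ▸ hv)
  rw [hy, mul_one] at hhead
  have hv0 : v 0 ≠ 0 := by
    intro h0
    rw [h0, zero_smul, zero_add] at htail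
    have hw := eq_zero_of_mulVec_eq_smul hA hgt htail
    exact hv_ne (funext fun j => Fin.cases h0 (congrFun hw) j)
  have hbound := mul_dotProduct_le_dotProduct_self hA hgt.le (eq_sub_of_add_eq htail)
  have hsecular : (lam - m) * (lam - 1) ≤ b ⬝ᵥ b := by
    rw [smul_dotProduct, dotProduct_smul, smul_dotProduct, smul_eq_mul, smul_eq_mul, smul_eq_mul,
      show b ⬝ᵥ Fin.tail v = (lam - 1) * v 0 by linarith] at hbound
    have hsq : 0 < v 0 * v 0 := mul_self_pos.mpr hv0
    nlinarith
  have hsum : ∑ k, b k ^ 2 = b ⬝ᵥ b := by simp [dotProduct, sq]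
  rw [hsum]
  have := (le_div_iff₀ (sub_pos.2 hgt)).2 (by linarith : (lam - 1) * (lam - m) ≤ b ⬝ᵥ b)
  linarith

theorem stmt16 {n r : ℕ} (hr : 0 < r) (Y : Matrix (Fin n) (Fin r) ℝ)
    (ε : ℝ) (hε : ε ∈ Set.Ioo (0 : ℝ) 1)
    (hspec : ∀ μ ∈ spectrum ℝ (Yᵀ * Y), 1 - ε ≤ μ ∧ μ ≤ 1 + ε)
    (y : Fin n → ℝ) (hy : y ⬝ᵥ y = 1)
    (Y' : Matrix (Fin n) (Fin (r + 1)) ℝ)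
    (hY' : Y' = Matrix.of fun i j => Fin.cases (y i) (fun k => Y i k) j)
    (lam : ℝ) (hlam : lam ∈ spectrum ℝ (Y'ᵀ * Y'))
    (hgt : eigs (Matrix.isHermitian_conjTranspose_mul_self Y) ⟨0, hr⟩ < lam) :
    0 ≤ 1 - lam + (∑ k, ((Yᵀ *ᵥ y) k) ^ 2) /
        (lam - eigs (Matrix.isHermitian_conjTranspose_mul_self Y) ⟨0, hr⟩) :=
  stmt16_general hr Y y hy Y' hY' lam hlam hgt
end
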